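/- Let V be a finite vertex set, d ≥ 1, and let Ã : V × V → ℝ be a matrix with nonnegative entries. Fix c_σ, w ≥ 0. Let σ : ℝ^d → ℝ^d be differentiable with ‖Dσ(y)‖ ≤ c_σ for all y, and for each ℓ ∈ ℕ let W^(ℓ) : ℝ^d → ℝ^d be a linear map with operator norm ‖W^(ℓ)‖ ≤ w. Define layer maps F^(ℓ) : (V → ℝ^d) → (V → ℝ^d) by F^(ℓ)(x)_i = σ(∑_{z ∈ V} Ã_{iz} W^(ℓ) x_z), and set X^(ℓ) = F^(ℓ-1) ∘ ⋯ ∘ F^(0). Then for every ℓ ≥ 0, every x : V → ℝ^d, and all i, j ∈ V, the operator norm of the block of the total derivative of X^(ℓ) at x sending variations of the j-th input coordinate to the i-th output coordinate (i.e. the norm of π_i ∘ DX^(ℓ)(x) ∘ ι_j) is at most c_σ^ℓ w^ℓ (Ã^ℓ)_{ij}. -/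

import Mathlib

open ContinuousLinearMap in
/-- The coordinate insertion map `ι_j : ℝ^d → (V → ℝ^d)` placing a vector at
coordinate `j` and `0` elsewhere, as a continuous linear map. -/
noncomputable def coordIncl {V : Type*} [DecidableEq V] (E : Type*)
    [NormedAddCommGroup E] [NormedSpace ℝ E] (j : V) : E →L[ℝ] (V → E) :=
  ContinuousLinearMap.pi (fun z => if z = j then ContinuousLinearMap.id ℝ E else 0)

/-!
Since `∑_z ι_z ∘ π_z = id`, the blocks `L_{ij} = π_i ∘ L ∘ ι_j` of a linear map on `V → E`
compose like matrix entries, so `‖(L ∘ M)_{ij}‖ ≤ ∑_z ‖L_{iz}‖ ‖M_{zj}‖`: entrywise bounds on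
block norms multiply as matrices. The derivative of a layer is the block-diagonal map
`(Dσ)_i`, with block norms at most `c_σ`, composed with the message-passing map, whose
blocks are `Ã_{ij} W`; so its block norms are bounded by `(c_σ w Ã)_{ij}`, and the chain rule
gives the bound `((c_σ w Ã)^ℓ)_{ij}` for `X^(ℓ)`.
-/

section

open ContinuousLinearMap

variable {V : Type*} {E F G : Type*} [NormedAddCommGroup E] [NormedSpace ℝ E]
  [NormedAddCommGroup F] [NormedSpace ℝ F] [NormedAddCommGroup G] [NormedSpace ℝ G]

section MessagePassing

variable [Fintype V]

noncomputable def messagePassing (A : Matrix V V ℝ) (T : E →L[ℝ] F) : (V → E) →L[ℝ] (V → F) :=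
  pi fun i => ∑ z, A i z • T.comp (proj z)

theorem messagePassing_apply (A : Matrix V V ℝ) (T : E →L[ℝ] F) (x : V → E) (i : V) :
    messagePassing A T x i = ∑ z, A i z • T (x z) := by
  simp [messagePassing]

theorem hasFDerivAt_pi_map {σ : E → F} {x : V → E} (hσ : ∀ i, DifferentiableAt ℝ σ (x i)) :
    HasFDerivAt (fun y i => σ (y i)) (pi fun i => (fderiv ℝ σ (x i)).comp (proj i)) x :=
  hasFDerivAt_pi'.2 fun i => (hσ i).hasFDerivAt.comp x (hasFDerivAt_apply i x)

noncomputable def gnnLayer (σ : F → G) (A : Matrix V V ℝ) (T : E →L[ℝ] F) :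
    (V → E) → (V → G) :=
  (fun y i => σ (y i)) ∘ messagePassing A T

theorem hasFDerivAt_gnnLayer {σ : F → G} (hσ : Differentiable ℝ σ) (A : Matrix V V ℝ)
    (T : E →L[ℝ] F) (x : V → E) :
    HasFDerivAt (gnnLayer σ A T)
      ((pi fun i => (fderiv ℝ σ (messagePassing A T x i)).comp (proj i)).comp
        (messagePassing A T)) x :=
  (hasFDerivAt_pi_map fun _ => hσ _).comp x (messagePassing A T).hasFDerivAt

theorem differentiable_gnnLayer {σ : F → G} (hσ : Differentiable ℝ σ) (A : Matrix V V ℝ)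
    (T : E →L[ℝ] F) : Differentiable ℝ (gnnLayer σ A T) :=
  fun x => (hasFDerivAt_gnnLayer hσ A T x).differentiableAt

end MessagePassing

section Blocks

variable [DecidableEq V]

noncomputable def piBlock (L : (V → E) →L[ℝ] (V → F)) (i j : V) : E →L[ℝ] F :=
  (proj i).comp (L.comp (coordIncl E j))

theorem proj_comp_coordIncl (i j : V) :
    (proj i).comp (coordIncl E j) = if i = j then ContinuousLinearMap.id ℝ E else 0 := by
  split_ifs with h <;> ext v <;> simp [coordIncl, h]

theorem norm_piBlock_id_le (i j : V) :
    ‖piBlock (ContinuousLinearMap.id ℝ (V → E)) i j‖ ≤ (1 : Matrix V V ℝ) i j := by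
  rw [piBlock, id_comp, proj_comp_coordIncl, Matrix.one_apply]
  split_ifs
  · exact norm_id_le
  · exact norm_zero.le

theorem norm_piBlock_pi_comp_proj_le {D : V → E →L[ℝ] F} {c : ℝ} (hD : ∀ i, ‖D i‖ ≤ c)
    (i j : V) :
    ‖piBlock (pi fun i => (D i).comp (proj i)) i j‖ ≤ (c • (1 : Matrix V V ℝ)) i j := by
  rw [piBlock, ← comp_assoc, proj_pi, comp_assoc, proj_comp_coordIncl, Matrix.smul_apply,
    Matrix.one_apply]
  split_ifs
  · simpa using hD i
  · simp

variable [Fintype V]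

theorem sum_coordIncl_comp_proj :
    ∑ z : V, (coordIncl E z).comp (proj z) = ContinuousLinearMap.id ℝ (V → E) := by
  ext x i : 2
  simp [coordIncl, ite_apply, apply_ite]

theorem piBlock_comp (L : (V → F) →L[ℝ] (V → G)) (M : (V → E) →L[ℝ] (V → F)) (i j : V) :
    piBlock (L.comp M) i j = ∑ z, (piBlock L i z).comp (piBlock M z j) := by
  conv_lhs => rw [← L.comp_id, ← sum_coordIncl_comp_proj]
  simp only [piBlock, comp_finsetSum, finsetSum_comp, comp_assoc]

theorem norm_piBlock_comp_le_of_le {L : (V → F) →L[ℝ] (V → G)} {M : (V → E) →L[ℝ] (V → F)}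
    {B C : Matrix V V ℝ} (hL : ∀ i j, ‖piBlock L i j‖ ≤ B i j)
    (hM : ∀ i j, ‖piBlock M i j‖ ≤ C i j) (i j : V) :
    ‖piBlock (L.comp M) i j‖ ≤ (B * C) i j := by
  rw [piBlock_comp, Matrix.mul_apply]
  refine (norm_sum_le _ _).trans (Finset.sum_le_sum fun z _ => ?_)
  exact (opNorm_comp_le _ _).trans <|
    mul_le_mul (hL i z) (hM z j) (norm_nonneg _) ((norm_nonneg _).trans (hL i z))

theorem piBlock_messagePassing (A : Matrix V V ℝ) (T : E →L[ℝ] F) (i j : V) :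
    piBlock (messagePassing A T) i j = A i j • T := by
  rw [piBlock, ← comp_assoc, messagePassing, proj_pi, finsetSum_comp]
  simp only [smul_comp, comp_assoc, proj_comp_coordIncl]
  simp [apply_ite T.comp]

theorem norm_piBlock_messagePassing_le {A : Matrix V V ℝ} (hA : ∀ i j, 0 ≤ A i j)
    {T : E →L[ℝ] F} {w : ℝ} (hT : ‖T‖ ≤ w) (i j : V) :
    ‖piBlock (messagePassing A T) i j‖ ≤ (w • A) i j := by
  rw [piBlock_messagePassing, norm_smul, Real.norm_of_nonneg (hA i j), Matrix.smul_apply,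
    smul_eq_mul, mul_comm w]
  exact mul_le_mul_of_nonneg_left hT (hA i j)

theorem norm_piBlock_fderiv_gnnLayer_le {σ : F → G} {c w : ℝ} (hσ : Differentiable ℝ σ)
    (hσ' : ∀ y, ‖fderiv ℝ σ y‖ ≤ c) {A : Matrix V V ℝ} (hA : ∀ i j, 0 ≤ A i j)
    {T : E →L[ℝ] F} (hT : ‖T‖ ≤ w) (x : V → E) (i j : V) :
    ‖piBlock (fderiv ℝ (gnnLayer σ A T) x) i j‖ ≤ ((c * w) • A) i j := by
  rw [(hasFDerivAt_gnnLayer hσ A T x).fderiv, mul_smul, ← Matrix.one_mul (w • A),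
    ← Matrix.smul_mul]
  exact norm_piBlock_comp_le_of_le (norm_piBlock_pi_comp_proj_le fun _ => hσ' _)
    (norm_piBlock_messagePassing_le hA hT) i j

end Blocks

end

theorem euclidean_gnn_jacobian_bound_general
    {V : Type*} [Fintype V] [DecidableEq V] {d : ℕ}
    (A : Matrix V V ℝ) (hA : ∀ i j, 0 ≤ A i j)
    (cσ w : ℝ)
    (σ : EuclideanSpace ℝ (Fin d) → EuclideanSpace ℝ (Fin d))
    (hσ : Differentiable ℝ σ) (hσ' : ∀ y, ‖fderiv ℝ σ y‖ ≤ cσ)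
    (W : ℕ → EuclideanSpace ℝ (Fin d) →L[ℝ] EuclideanSpace ℝ (Fin d))
    (hW : ∀ ℓ, ‖W ℓ‖ ≤ w)
    (F : ℕ → (V → EuclideanSpace ℝ (Fin d)) → (V → EuclideanSpace ℝ (Fin d)))
    (hF : ∀ ℓ x i, F ℓ x i = σ (∑ z, A i z • W ℓ (x z)))
    (X : ℕ → (V → EuclideanSpace ℝ (Fin d)) → (V → EuclideanSpace ℝ (Fin d)))
    (hX0 : X 0 = id) (hXs : ∀ ℓ, X (ℓ + 1) = F ℓ ∘ X ℓ) :
    ∀ (ℓ : ℕ) (x : V → EuclideanSpace ℝ (Fin d)) (i j : V),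
      ‖(ContinuousLinearMap.proj (R := ℝ)
            (φ := fun _ : V => EuclideanSpace ℝ (Fin d)) i).comp
          ((fderiv ℝ (X ℓ) x).comp (coordIncl (EuclideanSpace ℝ (Fin d)) j))‖ ≤
        cσ ^ ℓ * w ^ ℓ * (A ^ ℓ) i j := by
  have hF_eq : ∀ ℓ, F ℓ = gnnLayer σ A (W ℓ) := fun ℓ => by
    ext x i : 2
    rw [hF, gnnLayer, Function.comp_apply, messagePassing_apply]
  have hX_diff : ∀ ℓ, Differentiable ℝ (X ℓ) := by
    intro ℓ
    induction ℓ with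
    | zero => exact hX0 ▸ differentiable_id
    | succ n ih =>
      rw [hXs, hF_eq]
      exact (differentiable_gnnLayer hσ A (W n)).comp ih
  have hX_block : ∀ ℓ x i j, ‖piBlock (fderiv ℝ (X ℓ) x) i j‖ ≤ (((cσ * w) • A) ^ ℓ) i j := by
    intro ℓ
    induction ℓ with
    | zero => intro x; rw [hX0, fderiv_id, pow_zero]; exact norm_piBlock_id_le
    | succ n ih =>
      intro x
      rw [hXs, hF_eq, fderiv_comp x (differentiable_gnnLayer hσ A (W n) _) (hX_diff n x),
        pow_succ']
      exact norm_piBlock_comp_le_of_le (norm_piBlock_fderiv_gnnLayer_le hσ hσ' hA (hW n) _) (ih x)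
  intro ℓ x i j
  exact (hX_block ℓ x i j).trans_eq <| by
    rw [smul_pow, Matrix.smul_apply, smul_eq_mul, mul_pow]

/-- The Euclidean special case (k = K = 0) of Theorem 1, recovering the classical GNN
Jacobian bound of di Giovanni et al.: for layer maps
`F ℓ x i = σ (∑ z, Ã i z • W ℓ (x z))` and compositions `X ℓ = F (ℓ-1) ∘ ⋯ ∘ F 0`,
the operator norm of the `(i, j)` block `π_i ∘ D(X ℓ)(x) ∘ ι_j` of the total
derivative is at most `cσ^ℓ * w^ℓ * (Ã^ℓ) i j`. -/
theorem euclidean_gnn_jacobian_bound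
    {V : Type*} [Fintype V] [DecidableEq V] {d : ℕ} (hd : 1 ≤ d)
    (A : Matrix V V ℝ) (hA : ∀ i j, 0 ≤ A i j)
    (cσ w : ℝ) (hcσ : 0 ≤ cσ) (hw : 0 ≤ w)
    (σ : EuclideanSpace ℝ (Fin d) → EuclideanSpace ℝ (Fin d))
    (hσ : Differentiable ℝ σ) (hσ' : ∀ y, ‖fderiv ℝ σ y‖ ≤ cσ)
    (W : ℕ → EuclideanSpace ℝ (Fin d) →L[ℝ] EuclideanSpace ℝ (Fin d))
    (hW : ∀ ℓ, ‖W ℓ‖ ≤ w)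
    (F : ℕ → (V → EuclideanSpace ℝ (Fin d)) → (V → EuclideanSpace ℝ (Fin d)))
    (hF : ∀ ℓ x i, F ℓ x i = σ (∑ z, A i z • W ℓ (x z)))
    (X : ℕ → (V → EuclideanSpace ℝ (Fin d)) → (V → EuclideanSpace ℝ (Fin d)))
    (hX0 : X 0 = id) (hXs : ∀ ℓ, X (ℓ + 1) = F ℓ ∘ X ℓ) :
    ∀ (ℓ : ℕ) (x : V → EuclideanSpace ℝ (Fin d)) (i j : V),
      ‖(ContinuousLinearMap.proj (R := ℝ)
            (φ := fun _ : V => EuclideanSpace ℝ (Fin d)) i).comp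
          ((fderiv ℝ (X ℓ) x).comp (coordIncl (EuclideanSpace ℝ (Fin d)) j))‖ ≤
        cσ ^ ℓ * w ^ ℓ * (A ^ ℓ) i j :=
  euclidean_gnn_jacobian_bound_general A hA cσ w σ hσ hσ' W hW F hF X hX0 hXs
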